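/- arXiv:2212.06248 — 5 statements merged into one kernel-verified Lean document; each statement's English description precedes it below -/
import Mathlib

section
/- If Λ ⊆ ℤⁿ is a cubiquitous sublattice of finite index, then the index [ℤⁿ : Λ] is at most 2ⁿ. -/
/-!
Applying cubiquity to `-x` gives `-x + ε ∈ Λ` for some `ε ∈ {0,1}ⁿ`, so every `x` lies in the
coset `ε + Λ`. Hence the `2ⁿ` cosets of the vertices of the unit cube cover `ℤⁿ`.
-/

open Pointwise

/-- A sublattice `Λ ⊆ ℤⁿ` is *cubiquitous* if every unit cube `x + {0,1}ⁿ`, `x ∈ ℤⁿ`,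
contains a point of `Λ`. -/
def Cubiquitous {n : ℕ} (S : Set (Fin n → ℤ)) : Prop :=
  ∀ x : Fin n → ℤ, ∃ c ∈ S, ∀ i, c i = x i ∨ c i = x i + 1

lemma exists_eq_add_of_forall_eq_or_eq_add_one {n : ℕ} {x c : Fin n → ℤ}
    (h : ∀ i, c i = x i ∨ c i = x i + 1) :
    ∃ ε : Fin n → Fin 2, c = x + fun i => (ε i : ℤ) := by
  refine ⟨fun i => if c i = x i then 0 else 1, funext fun i => ?_⟩
  rcases h i with h | h <;> simp [h]

lemma Cubiquitous.iUnion_vadd_eq_univ {n : ℕ} {Λ : AddSubgroup (Fin n → ℤ)}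
    (hΛ : Cubiquitous (Λ : Set (Fin n → ℤ))) :
    ⋃ ε ∈ (Finset.univ : Finset (Fin n → Fin 2)), (fun i => (ε i : ℤ)) +ᵥ (Λ : Set (Fin n → ℤ)) =
      Set.univ := by
  refine Set.eq_univ_of_forall fun x => ?_
  obtain ⟨c, hc, hcube⟩ := hΛ (-x)
  obtain ⟨ε, rfl⟩ := exists_eq_add_of_forall_eq_or_eq_add_one hcube
  simp only [Finset.mem_univ, Set.iUnion_true, Set.mem_iUnion, mem_leftAddCoset_iff]
  exact ⟨ε, by simpa using Λ.neg_mem hc⟩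

theorem index_le_of_cubiquitous_general {n : ℕ} (Λ : AddSubgroup (Fin n → ℤ))
    (hcub : Cubiquitous (Λ : Set (Fin n → ℤ))) :
    Λ.index ≤ 2 ^ n := by
  simpa using AddSubgroup.index_le_of_leftCoset_cover_const hcub.iUnion_vadd_eq_univ

/-- If `Λ ⊆ ℤⁿ` is a cubiquitous sublattice of finite index, then `[ℤⁿ : Λ] ≤ 2ⁿ`. -/
theorem index_le_of_cubiquitous {n : ℕ} (Λ : AddSubgroup (Fin n → ℤ))
    (hfin : Λ.index ≠ 0) (hcub : Cubiquitous (Λ : Set (Fin n → ℤ))) :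
    Λ.index ≤ 2 ^ n :=
  index_le_of_cubiquitous_general Λ hcub
end

section
/- If H is an n×n lower triangular integer matrix with all diagonal entries equal to 2 and all below-diagonal entries in {0,1} (a Hajós matrix), then the lattice Λ_H ⊆ ℤⁿ generated by the columns of H is cubiquitous and has index 2ⁿ in ℤⁿ; i.e., every unit cube x + {0,1}ⁿ with x ∈ ℤⁿ contains exactly one point of Λ_H. -/
/-- A *Hajós matrix* is a lower triangular integer matrix with 2's on the diagonal and
below-diagonal entries in `{0,1}`. -/
def IsHajosMatrix {n : ℕ} (H : Matrix (Fin n) (Fin n) ℤ) : Prop :=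
  (∀ i, H i i = 2) ∧ (∀ i j, i < j → H i j = 0) ∧ (∀ i j, j < i → H i j = 0 ∨ H i j = 1)

/-- `Λ_H`: the sublattice of `ℤⁿ` generated by the columns of `H`. -/
def hajosLattice {n : ℕ} (H : Matrix (Fin n) (Fin n) ℤ) : AddSubgroup (Fin n → ℤ) :=
  AddSubgroup.closure (Set.range fun j => fun i => H i j)

/-!
A lower triangular integer matrix `H` with diagonal entries `2` has determinant `2ⁿ`, so its
columns span a lattice `Λ` of index `2ⁿ`. This lattice contains no nonzero vector `d` with
entries in `{-1, 0, 1}`: writing `d = H a`, the first nonzero `aᵢ` would give `|dᵢ| = 2 |aᵢ| ≥ 2`.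
Hence the `2ⁿ` points of a unit cube lie in pairwise distinct cosets of `Λ`, so they meet every
coset exactly once, in particular `Λ` itself.
-/

open Matrix

theorem Matrix.index_range_mulVecLin {ι : Type*} [Fintype ι] [DecidableEq ι]
    (A : Matrix ι ι ℤ) (hA : A.det ≠ 0) :
    (LinearMap.range A.mulVecLin).toAddSubgroup.index = A.det.natAbs := by
  let e := LinearEquiv.ofInjective A.mulVecLin (mulVec_injective_of_det_ne_zero hA)
  refine (Submodule.natAbs_det_equiv _ e).symm.trans ?_
  rw [← LinearMap.det_toLin']
  rfl

theorem Matrix.IsLowerTriangular.eq_zero_of_abs_mulVec_le_one {ι : Type*} [Fintype ι]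
    [LinearOrder ι] {A : Matrix ι ι ℤ} (hA : A.IsLowerTriangular) (hdiag : ∀ i, 2 ≤ |A i i|)
    {a : ι → ℤ} (ha : ∀ i, |(A *ᵥ a) i| ≤ 1) : a = 0 := by
  funext i
  induction i using WellFoundedLT.induction with
  | _ i ih =>
    have hrow : (A *ᵥ a) i = A i i * a i := by
      refine Finset.sum_eq_single i (fun j _ hji => ?_) (by simp)
      rcases hji.lt_or_gt with hj | hj
      · exact mul_eq_zero_of_right _ (ih j hj)
      · exact mul_eq_zero_of_left (hA hj) _
    have hbound := ha i
    rw [hrow, abs_mul] at hbound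
    by_contra h
    nlinarith [hdiag i, Int.one_le_abs h]

theorem AddSubgroup.existsUnique_mem_unitCube {ι : Type*} [Fintype ι] {Λ : AddSubgroup (ι → ℤ)}
    (hindex : Λ.index = 2 ^ Fintype.card ι) (hΛ : ∀ d ∈ Λ, (∀ i, |d i| ≤ 1) → d = 0)
    (x : ι → ℤ) : ∃! c, c ∈ Λ ∧ ∀ i, c i = x i ∨ c i = x i + 1 := by
  have : Λ.FiniteIndex := ⟨by rw [hindex]; positivity⟩
  let corner : (ι → Fin 2) → (ι → ℤ) ⧸ Λ := fun ε => ↑(x + fun i => ((ε i : ℕ) : ℤ))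
  have hinj : corner.Injective := by
    intro ε ε' h
    have h0 := hΛ _ (QuotientAddGroup.eq.mp h) fun i => by
      simp only [Pi.add_apply, Pi.neg_apply]
      have := (ε i).isLt; have := (ε' i).isLt
      rw [abs_le]; omega
    funext i
    have := congr_fun h0 i
    simp only [Pi.add_apply, Pi.neg_apply, Pi.zero_apply] at this
    exact Fin.ext (by omega)
  have hcard : Nat.card ((ι → ℤ) ⧸ Λ) ≤ Nat.card (ι → Fin 2) := by
    change Λ.index ≤ _
    simp [hindex, Nat.card_fun, Nat.card_eq_fintype_card]
  obtain ⟨ε, hε⟩ := (hinj.bijective_of_nat_card_le hcard).2 0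
  refine ⟨_, ⟨(QuotientAddGroup.eq_zero_iff _).mp hε, fun i => ?_⟩, ?_⟩
  · have := (ε i).isLt
    simp only [Pi.add_apply]
    omega
  · rintro c ⟨hc, hcube⟩
    refine sub_eq_zero.mp (hΛ _ (sub_mem hc ((QuotientAddGroup.eq_zero_iff _).mp hε)) fun i => ?_)
    have := (ε i).isLt
    have := hcube i
    simp only [Pi.sub_apply, Pi.add_apply]
    rw [abs_le]; omega

theorem hajosLattice_eq_range {n : ℕ} (H : Matrix (Fin n) (Fin n) ℤ) :
    hajosLattice H = (LinearMap.range H.mulVecLin).toAddSubgroup := by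
  rw [range_mulVecLin, Submodule.span_int_eq_addSubgroupClosure]
  rfl

namespace IsHajosMatrix

variable {n : ℕ} {H : Matrix (Fin n) (Fin n) ℤ}

theorem isLowerTriangular (hH : IsHajosMatrix H) : H.IsLowerTriangular :=
  fun i j hij => hH.2.1 i j hij

theorem det_eq_two_pow (hH : IsHajosMatrix H) : H.det = 2 ^ n := by
  simp [det_of_isLowerTriangular _ hH.isLowerTriangular, hH.1]

theorem index_hajosLattice (hH : IsHajosMatrix H) : (hajosLattice H).index = 2 ^ n := by
  have hdet := hH.det_eq_two_pow
  rw [hajosLattice_eq_range, index_range_mulVecLin _ (by simp [hdet]), hdet]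
  simp

theorem eq_zero_of_mem_hajosLattice (hH : IsHajosMatrix H) {d : Fin n → ℤ}
    (hd : d ∈ hajosLattice H) (hsmall : ∀ i, |d i| ≤ 1) : d = 0 := by
  rw [hajosLattice_eq_range] at hd
  obtain ⟨a, rfl⟩ := hd
  rw [hH.isLowerTriangular.eq_zero_of_abs_mulVec_le_one (by simp [hH.1]) hsmall]
  exact mulVec_zero H

end IsHajosMatrix

/-- If `H` is a Hajós matrix, then `Λ_H` meets every unit cube `x + {0,1}ⁿ` in exactly one
point (so it is cubiquitous, a 2-cube tiling lattice), and it has index `2ⁿ` in `ℤⁿ`. -/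
theorem hajosLattice_two_cube_tiling {n : ℕ} (H : Matrix (Fin n) (Fin n) ℤ)
    (hH : IsHajosMatrix H) :
    (∀ x : Fin n → ℤ, ∃! c : Fin n → ℤ,
        c ∈ hajosLattice H ∧ ∀ i, c i = x i ∨ c i = x i + 1) ∧
    (hajosLattice H).index = 2 ^ n :=
  ⟨AddSubgroup.existsUnique_mem_unitCube (by simpa using hH.index_hajosLattice)
    fun _ => hH.eq_zero_of_mem_hajosLattice, hH.index_hajosLattice⟩
end

section
/- Let Λ ⊆ ℤⁿ be a 2-cube tiling lattice given as Λ_H for a Hajós matrix H, and let y ∈ Λ with y · y = 4. Then ±y = 2e_i for some standard basis vector e_i, and y or −y is a column of H. -/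
/-!
Write `y = H c`. As `H` is lower triangular with `2` on the diagonal, the coefficients `c_k`
vanish before the first nonzero entry `y_i` of `y`, and then `y_i = 2 c_i`; so `y_i² ≥ 4`, and
`y · y = 4` leaves room for no other entry: `y = ±2 eᵢ`. Then `H eᵢ - 2 eᵢ` is a lattice vector
with entries in `{0, 1}`; its first nonzero entry would be odd, so it vanishes and the `i`-th
column of `H` is `2 eᵢ`.
-/

open Finset Matrix

theorem Function.exists_ne_zero_forall_lt_eq_zero {ι M : Type*} [LinearOrder ι] [WellFoundedLT ι]
    [Zero M] {v : ι → M} (hv : v ≠ 0) : ∃ i, v i ≠ 0 ∧ ∀ k < i, v k = 0 := by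
  obtain ⟨i, hi, hmin⟩ := wellFounded_lt.has_min {k | v k ≠ 0} (Function.ne_iff.mp hv)
  exact ⟨i, hi, fun k hk => not_not.mp fun h => hmin k h hk⟩

theorem Pi.eq_single_of_sum_mul_self_le {ι R : Type*} [Fintype ι] [DecidableEq ι] [Ring R]
    [LinearOrder R] [IsStrictOrderedRing R] {y : ι → R} {i : ι}
    (h : ∑ k, y k * y k ≤ y i * y i) : y = Pi.single i (y i) := by
  have hrest : ∑ k ∈ univ.erase i, y k * y k = 0 := by
    rw [← add_sum_erase univ _ (mem_univ i)] at h
    exact le_antisymm ((add_le_iff_nonpos_right _).mp h)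
      (sum_nonneg fun k _ => mul_self_nonneg (y k))
  funext k
  rcases eq_or_ne k i with rfl | hk
  · simp
  · rw [Pi.single_eq_of_ne hk]
    exact mul_self_eq_zero.mp <| (sum_eq_zero_iff_of_nonneg fun k _ => mul_self_nonneg (y k)).mp
      hrest k (mem_erase.mpr ⟨hk, mem_univ k⟩)

theorem Int.four_le_mul_self_of_even {a : ℤ} (ha : Even a) (h0 : a ≠ 0) : 4 ≤ a * a := by
  obtain ⟨b, rfl⟩ := ha
  have hb : b ≠ 0 := by rintro rfl; simp at h0
  nlinarith [Int.one_le_abs hb, abs_mul_abs_self b]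

namespace Matrix

variable {ι R : Type*} [LinearOrder ι] [Fintype ι] [Semiring R] {H : Matrix ι ι R} {c : ι → R}

theorem mulVec_apply_eq_diag_mul (hH : ∀ i j, i < j → H i j = 0) {k : ι}
    (hc : ∀ j < k, c j = 0) : (H *ᵥ c) k = H k k * c k := by
  refine sum_eq_single k (fun j _ hjk => ?_) (by simp)
  rcases hjk.lt_or_gt with h | h
  · simp [hc j h]
  · simp [hH k j h]

theorem eq_zero_of_mulVec_eq_zero_of_lt [NoZeroDivisors R] (hH : ∀ i j, i < j → H i j = 0)
    (hdiag : ∀ i, H i i ≠ 0) {i : ι} (hv : ∀ k < i, (H *ᵥ c) k = 0) : ∀ k < i, c k = 0 := by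
  intro k
  induction k using WellFoundedLT.induction with
  | _ k ih =>
    intro hki
    have hk := hv k hki
    rw [mulVec_apply_eq_diag_mul hH fun j hjk => ih j hjk (hjk.trans hki)] at hk
    exact (mul_eq_zero.mp hk).resolve_left (hdiag k)

end Matrix

theorem mem_hajosLattice_iff {n : ℕ} {H : Matrix (Fin n) (Fin n) ℤ} {v : Fin n → ℤ} :
    v ∈ hajosLattice H ↔ ∃ c, H *ᵥ c = v := by
  rw [hajosLattice, ← Submodule.span_int_eq_addSubgroupClosure, Submodule.mem_toAddSubgroup]
  change v ∈ Submodule.span ℤ (Set.range H.col) ↔ _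
  rw [← range_mulVecLin]
  rfl

namespace IsHajosMatrix

variable {n : ℕ} {H : Matrix (Fin n) (Fin n) ℤ} (hH : IsHajosMatrix H)
include hH

theorem even_of_mem_of_forall_lt_eq_zero {v : Fin n → ℤ} (hv : v ∈ hajosLattice H) {i : Fin n}
    (h0 : ∀ k < i, v k = 0) : Even (v i) := by
  obtain ⟨c, rfl⟩ := mem_hajosLattice_iff.mp hv
  have hc := eq_zero_of_mulVec_eq_zero_of_lt hH.2.1 (fun k => by rw [hH.1 k]; norm_num) h0
  rw [mulVec_apply_eq_diag_mul hH.2.1 hc, hH.1 i]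
  exact even_two_mul (c i)

theorem eq_zero_of_mem_of_forall_eq_zero_or_eq_one {v : Fin n → ℤ} (hv : v ∈ hajosLattice H)
    (h01 : ∀ k, v k = 0 ∨ v k = 1) : v = 0 := by
  funext k
  induction k using WellFoundedLT.induction with
  | _ k ih =>
    have heven := hH.even_of_mem_of_forall_lt_eq_zero hv ih
    rcases h01 k with h | h
    · exact h
    · rw [h] at heven
      exact absurd heven Int.not_even_one

theorem col_eq_pi_single_of_mem {i : Fin n} (hi : Pi.single i 2 ∈ hajosLattice H) :
    (fun k => H k i) = Pi.single i 2 := by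
  have hmem : (fun k => H k i) - Pi.single i 2 ∈ hajosLattice H :=
    sub_mem (AddSubgroup.subset_closure ⟨i, rfl⟩) hi
  have h01 : ∀ k, H k i - (Pi.single i 2 : Fin n → ℤ) k = 0 ∨
      H k i - (Pi.single i 2 : Fin n → ℤ) k = 1 := by
    intro k
    rcases lt_trichotomy k i with h | rfl | h
    · simp [hH.2.1 k i h, Pi.single_eq_of_ne h.ne]
    · simp [hH.1 k]
    · simpa [Pi.single_eq_of_ne h.ne'] using hH.2.2 k i h
  exact sub_eq_zero.mp (hH.eq_zero_of_mem_of_forall_eq_zero_or_eq_one hmem h01)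

theorem exists_eq_pi_single_of_sum_mul_self_eq_four {y : Fin n → ℤ} (hy : y ∈ hajosLattice H)
    (hsq : ∑ i, y i * y i = 4) : ∃ i, y = Pi.single i 2 ∨ y = Pi.single i (-2) := by
  have hy0 : y ≠ 0 := by rintro rfl; simp at hsq
  obtain ⟨i, hi0, hlt⟩ := Function.exists_ne_zero_forall_lt_eq_zero hy0
  have hge : 4 ≤ y i * y i :=
    Int.four_le_mul_self_of_even (hH.even_of_mem_of_forall_lt_eq_zero hy hlt) hi0
  have hle : y i * y i ≤ 4 :=
    hsq ▸ single_le_sum (f := fun k => y k * y k) (fun k _ => mul_self_nonneg (y k)) (mem_univ i)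
  have hsingle := Pi.eq_single_of_sum_mul_self_le (hsq.trans_le hge)
  have hyi : y i = 2 ∨ y i = -2 :=
    mul_self_eq_mul_self_iff.mp ((le_antisymm hle hge).trans (by norm_num))
  exact ⟨i, hyi.imp (fun h => by rwa [h] at hsingle) (fun h => by rwa [h] at hsingle)⟩

end IsHajosMatrix

/-- Let `Λ = Λ_H ⊆ ℤⁿ` be a 2-cube tiling lattice given by a Hajós matrix `H`, and let `y ∈ Λ`
with `y · y = 4`.  Then `±y = 2eᵢ` for some standard basis vector `eᵢ`, and `y` or `-y` is a
column of `H`. -/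
theorem square_four_is_hajos_column {n : ℕ} (H : Matrix (Fin n) (Fin n) ℤ)
    (hH : IsHajosMatrix H) (y : Fin n → ℤ) (hy : y ∈ hajosLattice H)
    (hsq : ∑ i, y i * y i = 4) :
    (∃ i : Fin n, y = Pi.single i (2 : ℤ) ∨ y = Pi.single i (-2 : ℤ)) ∧
    (∃ j : Fin n, (fun i => H i j) = y ∨ (fun i => H i j) = -y) := by
  obtain ⟨i, hi⟩ := hH.exists_eq_pi_single_of_sum_mul_self_eq_four hy hsq
  have h2 : Pi.single i (2 : ℤ) ∈ hajosLattice H := by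
    rcases hi with rfl | rfl
    · exact hy
    · simpa [Pi.single_neg] using neg_mem hy
  have hcol := hH.col_eq_pi_single_of_mem h2
  refine ⟨⟨i, hi⟩, i, ?_⟩
  rcases hi with rfl | rfl
  · exact Or.inl hcol
  · right
    rw [hcol, ← Pi.single_neg, neg_neg]
end

section
/- Let G be a finite graph with a fixed orientation, and regard C₁(G;ℤ) as the Euclidean lattice with the oriented edges as orthonormal basis. Then an element x of the flow lattice Flow(G) = ker(∂: C₁(G;ℤ) → C₀(G;ℤ)) is simple (i.e., admits no decomposition x = y + z with y, z ∈ Flow(G) nonzero and y · z > 0) if and only if |x · e| ≤ 1 for every edge e, i.e., x is the class of an oriented Eulerian subgraph of G. -/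
/-!
If `y · z > 0` then some edge has `y e * z e ≥ 1`, so `y e` and `z e` are nonzero of the same
sign and `|x e| = |y e| + |z e| ≥ 2`. Conversely, reverse the edges where `x < 0`, so that `|x|`
is a nonnegative flow. Following edges that carry flow out of the head of the previous one, any
walk eventually runs around a periodic orbit, a directed cycle inside the support; peeling such
cycles off `|x|` one at a time, some cycle `C` passes through a given edge `e₀`. Back in the
original orientation, `y = sign x` on `C` (and `0` elsewhere) is a flow with
`y · (x - y) = ∑_{e ∈ C} (|x e| - 1) ≥ |x e₀| - 1`, which is positive as soon as
`|x e₀| ≥ 2`.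
-/

/-- `x : E → ℤ` is a flow on the oriented graph with edge-endpoint maps `src`, `tgt`:
it lies in the kernel of the boundary map `∂ : C₁(G;ℤ) → C₀(G;ℤ)`. -/
def IsFlow {V E : Type} [Fintype E] (src tgt : E → V) [DecidableEq V] (x : E → ℤ) : Prop :=
  ∀ v : V, ∑ e, x e * ((if tgt e = v then 1 else 0) - (if src e = v then 1 else 0)) = 0

open Finset Function

namespace Function

variable {α : Type*}

theorem exists_iterate_mem_periodicPts [Finite α] (g : α → α) (a : α) :
    ∃ n, g^[n] a ∈ periodicPts g := by
  obtain ⟨m, n, heq, hne⟩ : ∃ m n, g^[m] a = g^[n] a ∧ m ≠ n := by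
    simpa [Injective] using not_injective_infinite_finite (g^[·] a)
  rcases lt_or_gt_of_ne hne with hlt | hlt
  · refine ⟨m, mk_mem_periodicPts (Nat.sub_pos_of_lt hlt) ?_⟩
    rw [IsPeriodicPt, IsFixedPt, ← iterate_add_apply, Nat.sub_add_cancel hlt.le, heq]
  · refine ⟨n, mk_mem_periodicPts (Nat.sub_pos_of_lt hlt) ?_⟩
    rw [IsPeriodicPt, IsFixedPt, ← iterate_add_apply, Nat.sub_add_cancel hlt.le, heq]

theorem sum_range_minimalPeriod_iterate_succ {M : Type*} [AddCancelCommMonoid M]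
    (g : α → α) (p : α) (F : α → M) :
    ∑ n ∈ range (minimalPeriod g p), F (g^[n + 1] p) =
      ∑ n ∈ range (minimalPeriod g p), F (g^[n] p) := by
  have h := sum_range_succ' (fun n => F (g^[n] p)) (minimalPeriod g p)
  rw [sum_range_succ, iterate_minimalPeriod, iterate_zero_apply] at h
  exact (add_right_cancel h).symm

noncomputable def periodicOrbitFinset [DecidableEq α] (g : α → α) (p : α) : Finset α :=
  (range (minimalPeriod g p)).image (g^[·] p)

end Function

namespace Int

theorem mul_nonpos_of_abs_add_le_one {a b : ℤ} (h : |a + b| ≤ 1) : a * b ≤ 0 := by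
  by_contra! hab
  have := pos_and_pos_or_neg_and_neg_of_mul_pos hab
  rw [abs_le] at h
  omega

theorem sign_mul_sub_sign_nonneg (a : ℤ) : 0 ≤ a.sign * (a - a.sign) := by
  rcases lt_trichotomy a 0 with h | rfl | h
  · rw [sign_eq_neg_one_of_neg h]; omega
  · simp
  · rw [sign_eq_one_of_pos h]; omega

theorem sign_mul_sub_sign_pos {a : ℤ} (h : 1 < |a|) : 0 < a.sign * (a - a.sign) := by
  rcases lt_trichotomy a 0 with ha | rfl | ha
  · rw [sign_eq_neg_one_of_neg ha]; rw [abs_of_neg ha] at h; omega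
  · simp at h
  · rw [sign_eq_one_of_pos ha]; rw [abs_of_pos ha] at h; omega

end Int

section Flow

variable {V E : Type} [Fintype E] [DecidableEq V] {src tgt : E → V} {x y : E → ℤ}

theorem isFlow_iff_sum_in_eq_sum_out :
    IsFlow src tgt x ↔ ∀ v, ∑ e with tgt e = v, x e = ∑ e with src e = v, x e := by
  simp only [IsFlow, mul_sub, mul_ite, mul_one, mul_zero, sum_sub_distrib, ← sum_filter,
    sub_eq_zero]

theorem IsFlow.sub (hx : IsFlow src tgt x) (hy : IsFlow src tgt y) : IsFlow src tgt (x - y) := by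
  intro v
  simp only [Pi.sub_apply, sub_mul, sum_sub_distrib, hx v, hy v, sub_zero]

def orient (src tgt : E → V) (r : E → Bool) (e : E) : V := if r e then tgt e else src e

theorem isFlow_orient_iff {r : E → Bool} :
    IsFlow (orient src tgt r) (orient tgt src r) y ↔
      IsFlow src tgt (fun e => (if r e then -1 else 1) * y e) := by
  refine forall_congr' fun v => iff_of_eq (congrArg (· = 0) (sum_congr rfl fun e _ => ?_))
  cases h : r e <;> simp only [orient, h, Bool.false_eq_true, if_true, if_false] <;> ring

theorem IsFlow.exists_out_edge (hx : IsFlow src tgt x) (hnn : 0 ≤ x) {e : E} (he : 0 < x e) :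
    ∃ e', 0 < x e' ∧ src e' = tgt e := by
  have hin : 0 < ∑ e' with tgt e' = tgt e, x e' :=
    he.trans_le (single_le_sum (fun e' _ => hnn e') (mem_filter.2 ⟨mem_univ e, rfl⟩))
  rw [isFlow_iff_sum_in_eq_sum_out.1 hx, ← sum_const_zero (s := {e' | src e' = tgt e})] at hin
  obtain ⟨e', he', hpos⟩ := exists_lt_of_sum_lt hin
  exact ⟨e', hpos, (mem_filter.1 he').2⟩

theorem isFlow_indicator_periodicOrbitFinset [DecidableEq E] (g : E → E) (p : E)
    (hg : ∀ n, src (g^[n + 1] p) = tgt (g^[n] p)) :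
    IsFlow src tgt ((periodicOrbitFinset g p : Set E).indicator 1) := by
  intro v
  simp only [periodicOrbitFinset, Set.indicator_apply, mem_coe, Pi.one_apply, ite_mul, one_mul,
    zero_mul]
  rw [sum_ite_mem, univ_inter, sum_image (by simpa using iterate_injOn_Iio_minimalPeriod),
    sum_sub_distrib]
  simp only [← hg]
  rw [sum_range_minimalPeriod_iterate_succ g p (fun e => if src e = v then (1 : ℤ) else 0),
    sub_self]

theorem IsFlow.exists_cycle (hx : IsFlow src tgt x) (hnn : 0 ≤ x) {e₁ : E}
    (he₁ : 0 < x e₁) :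
    ∃ C : Finset E, C.Nonempty ∧ (∀ e ∈ C, 0 < x e) ∧
      IsFlow src tgt ((C : Set E).indicator 1) := by
  classical
  choose! g hg using fun e (he : 0 < x e) => hx.exists_out_edge hnn he
  have hpos : ∀ n, 0 < x (g^[n] e₁) := by
    intro n
    induction n with
    | zero => exact he₁
    | succ n ih => rw [iterate_succ_apply']; exact (hg _ ih).1
  obtain ⟨k, hk⟩ := exists_iterate_mem_periodicPts g e₁
  have hpos' : ∀ n, 0 < x (g^[n] (g^[k] e₁)) := fun n => by
    rw [← iterate_add_apply]; exact hpos _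
  refine ⟨periodicOrbitFinset g (g^[k] e₁), ⟨g^[k] e₁, mem_image.2
    ⟨0, mem_range.2 (minimalPeriod_pos_of_mem_periodicPts hk), rfl⟩⟩, ?_,
    isFlow_indicator_periodicOrbitFinset g _ fun n => ?_⟩
  · simp only [periodicOrbitFinset, mem_image]
    rintro _ ⟨n, -, rfl⟩
    exact hpos' n
  · rw [iterate_succ_apply']
    exact (hg _ (hpos' n)).2

theorem IsFlow.exists_cycle_mem (hx : IsFlow src tgt x) (hnn : 0 ≤ x) {e₀ : E}
    (he₀ : 0 < x e₀) :
    ∃ C : Finset E, e₀ ∈ C ∧ (∀ e ∈ C, 0 < x e) ∧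
      IsFlow src tgt ((C : Set E).indicator 1) := by
  induction hN : (∑ e, x e).toNat using Nat.strong_induction_on generalizing x with
  | _ N ih =>
  obtain ⟨C, ⟨e₁, he₁⟩, hCpos, hC⟩ := hx.exists_cycle hnn he₀
  by_cases h : e₀ ∈ C
  · exact ⟨C, h, hCpos, hC⟩
  set c := (C : Set E).indicator (1 : E → ℤ)
  have hc_nonneg : 0 ≤ c := Set.indicator_nonneg fun _ _ => zero_le_one
  have hc_le : c ≤ x := by
    intro e
    by_cases he : e ∈ C
    · simpa [c, he] using Int.add_one_le_of_lt (hCpos e he)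
    · simpa [c, he] using hnn e
  have hlt : ∑ e, (x - c) e < ∑ e, x e :=
    sum_lt_sum (fun e _ => sub_le_self _ (hc_nonneg e)) ⟨e₁, mem_univ _, by simp [c, he₁]⟩
  have hnn' : 0 ≤ ∑ e, (x - c) e := sum_nonneg fun e _ => sub_nonneg.2 (hc_le e)
  obtain ⟨C', h₀, hC'pos, hC'⟩ := ih _ (hN ▸ by omega) (hx.sub hC) (sub_nonneg.2 hc_le)
    (by simpa [c, h] using he₀) rfl
  exact ⟨C', h₀, fun e he => (hC'pos e he).trans_le (sub_le_self _ (hc_nonneg e)), hC'⟩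

theorem IsFlow.exists_conformal_cycle_mem (hx : IsFlow src tgt x) {e₀ : E}
    (he₀ : x e₀ ≠ 0) :
    ∃ C : Finset E, e₀ ∈ C ∧
      IsFlow src tgt ((C : Set E).indicator fun e => (x e).sign) := by
  set r : E → Bool := fun e => decide (x e < 0)
  have hsign : ∀ e, (if r e then -1 else 1) * |x e| = x e := fun e => by
    by_cases h : x e < 0 <;> simp [r, h, abs_of_neg, abs_of_nonneg, not_lt.1]
  have habs : IsFlow (orient src tgt r) (orient tgt src r) |x| :=
    isFlow_orient_iff.2 (by simpa only [Pi.abs_apply, hsign] using hx)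
  obtain ⟨C, h₀, hCpos, hC⟩ := habs.exists_cycle_mem (abs_nonneg x) (abs_pos.2 he₀)
  refine ⟨C, h₀, ?_⟩
  convert isFlow_orient_iff.1 hC using 2 with e
  by_cases he : e ∈ C
  · rcases (abs_pos.1 (hCpos e he)).lt_or_gt with h | h <;>
      simp [he, r, h, h.not_gt, Int.sign_eq_neg_one_of_neg, Int.sign_eq_one_of_pos]
  · simp [he]

end Flow

theorem flow_simple_iff_eulerian_general {V E : Type} [Fintype E] [DecidableEq V]
    (src tgt : E → V) (x : E → ℤ) (hx : IsFlow src tgt x) :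
    (∀ y z : E → ℤ, IsFlow src tgt y → IsFlow src tgt z → y ≠ 0 → z ≠ 0 →
        y + z = x → ∑ e, y e * z e ≤ 0) ↔ ∀ e, |x e| ≤ 1 := by
  constructor
  · intro hsimple e₀
    by_contra! h
    obtain ⟨C, he₀, hC⟩ := hx.exists_conformal_cycle_mem (abs_pos.1 (one_pos.trans h))
    set y := (C : Set E).indicator fun e => (x e).sign
    have hterm : ∀ e, 0 ≤ y e * (x - y) e := fun e => by
      by_cases he : e ∈ C
      · simpa [y, he] using Int.sign_mul_sub_sign_nonneg (x e)
      · simp [y, he]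
    have hterm₀ : 0 < y e₀ * (x - y) e₀ := by
      simpa [y, he₀] using Int.sign_mul_sub_sign_pos h
    refine (hsimple y (x - y) hC (hx.sub hC) ?_ ?_ (add_sub_cancel _ _)).not_gt
      (sum_pos' (fun e _ => hterm e) ⟨e₀, mem_univ _, hterm₀⟩)
    · exact fun h0 => hterm₀.ne' (by rw [h0, Pi.zero_apply, zero_mul])
    · exact fun h0 => hterm₀.ne' (by rw [h0, Pi.zero_apply, mul_zero])
  · intro h y z _ _ _ _ hyz
    exact sum_nonpos fun e _ => Int.mul_nonpos_of_abs_add_le_one (by simpa [← hyz] using h e)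

/-- An element `x` of the flow lattice `Flow(G)` is simple (it admits no decomposition
`x = y + z` with `y, z ∈ Flow(G)` nonzero and `y · z > 0`) if and only if `|x · e| ≤ 1` for
every edge `e`, i.e., `x` is the class of an oriented Eulerian subgraph of `G`. -/
theorem flow_simple_iff_eulerian {V E : Type} [Fintype V] [Fintype E] [DecidableEq V]
    (src tgt : E → V) (x : E → ℤ) (hx : IsFlow src tgt x) :
    (∀ y z : E → ℤ, IsFlow src tgt y → IsFlow src tgt z → y ≠ 0 → z ≠ 0 →
        y + z = x → ∑ e, y e * z e ≤ 0) ↔ ∀ e, |x e| ≤ 1 :=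
  flow_simple_iff_eulerian_general src tgt x hx
end

section
/- Suppose Λ₂ ⊆ Λ₁ ⊕ ℤⁿ is a finite-index sublattice such that every cube λ + x + {0,1}ⁿ with λ ∈ Λ₁ and x ∈ ℤⁿ contains exactly one point of Λ₂ (where the {0,1}ⁿ cube sits in the ℤⁿ factor). Then Λ₂ ∩ ({0} ⊕ ℤⁿ) is a 2-cube tiling lattice of ℤⁿ, and for every element λ of a fixed generating set of Λ₁ there is a unique x ∈ {0,1}ⁿ with λ + x ∈ Λ₂; moreover [Λ₁ ⊕ ℤⁿ : Λ₂] = 2ⁿ. -/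
/-!
Condition (★) says that every translate `(λ, x) + ({0} × {0,1}ⁿ)` meets `Λ₂` exactly once. Taking
`λ = 0` gives the cube tiling of `ℤⁿ`, taking `x = 0` gives the unique `{0,1}`-lift of `λ`.
For the index, the `2ⁿ` classes of the vertices `(0, -b)`, `b ∈ {0,1}ⁿ`, exhaust the quotient
(the point of `Λ₂` in the cube at `(λ, x)` is `(λ, x + b)` for some vertex `b`) and are distinct
(the differences of two vertices and `0` lie in a common unit cube).
-/

namespace CubeTiling

variable {A ι : Type*} [AddCommGroup A]

def InUnitCube (x y : ι → ℤ) : Prop := ∀ i, y i = x i ∨ y i = x i + 1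

def cubeVertex (b : ι → Bool) : ι → ℤ := fun i => if b i then 1 else 0

theorem cubeVertex_injective : Function.Injective (cubeVertex (ι := ι)) := by
  intro b b' h
  funext i
  have hi := congrFun h i
  cases hb : b i <;> cases hb' : b' i <;> simp_all [cubeVertex]

theorem inUnitCube_iff {x y : ι → ℤ} : InUnitCube x y ↔ ∃ b, y = x + cubeVertex b := by
  constructor
  · intro h
    refine ⟨fun i => decide (y i = x i + 1), funext fun i => ?_⟩
    rcases h i with hi | hi <;> simp [cubeVertex, hi]
  · rintro ⟨b, rfl⟩ i
    cases b i <;> simp [cubeVertex]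

def StarCondition (Λ : AddSubgroup (A × (ι → ℤ))) : Prop :=
  ∀ (lam : A) (x : ι → ℤ), ∃! p : A × (ι → ℤ), p ∈ Λ ∧ p.1 = lam ∧ InUnitCube x p.2

namespace StarCondition

variable {Λ : AddSubgroup (A × (ι → ℤ))} (h : StarCondition Λ)
include h

theorem existsUnique_fiber (lam : A) (x : ι → ℤ) :
    ∃! y : ι → ℤ, (lam, y) ∈ Λ ∧ InUnitCube x y := by
  obtain ⟨⟨lam', y⟩, ⟨hp, rfl, hy⟩, huniq⟩ := h lam x
  exact ⟨y, ⟨hp, hy⟩, fun y' hy' => congrArg Prod.snd (huniq (lam', y') ⟨hy'.1, rfl, hy'.2⟩)⟩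

theorem eq_of_mem_of_mem {lam : A} {x y y' : ι → ℤ} (hy : (lam, y) ∈ Λ) (hy' : (lam, y') ∈ Λ)
    (hxy : InUnitCube x y) (hxy' : InUnitCube x y') : y = y' :=
  (h.existsUnique_fiber lam x).unique ⟨hy, hxy⟩ ⟨hy', hxy'⟩

theorem mk_neg_cubeVertex_bijective :
    Function.Bijective fun b : ι → Bool =>
      (QuotientAddGroup.mk ((0 : A), -cubeVertex b) : (A × (ι → ℤ)) ⧸ Λ) := by
  constructor
  · intro b b' hbb'
    rw [QuotientAddGroup.eq] at hbb'
    have hmem : ((0 : A), cubeVertex b - cubeVertex b') ∈ Λ := by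
      simpa [sub_eq_add_neg] using hbb'
    have hdiff : InUnitCube (-cubeVertex b') (cubeVertex b - cubeVertex b') :=
      inUnitCube_iff.2 ⟨b, by abel⟩
    have hzero : InUnitCube (-cubeVertex b') 0 := inUnitCube_iff.2 ⟨b', by abel⟩
    exact cubeVertex_injective
      (sub_eq_zero.1 (h.eq_of_mem_of_mem hmem Λ.zero_mem hdiff hzero))
  · rintro ⟨⟨lam, x⟩⟩
    obtain ⟨y, ⟨hy, hxy⟩, -⟩ := h.existsUnique_fiber lam x
    obtain ⟨b, rfl⟩ := inUnitCube_iff.1 hxy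
    refine ⟨b, QuotientAddGroup.eq.2 ?_⟩
    simpa [add_comm] using hy

theorem index_eq [Finite ι] : Λ.index = 2 ^ Nat.card ι := by
  rw [AddSubgroup.index, ← Nat.card_eq_of_bijective _ h.mk_neg_cubeVertex_bijective, Nat.card_fun]
  simp

end StarCondition

end CubeTiling

open CubeTiling in
theorem star_condition_consequences_general {A : Type} [AddCommGroup A]
    {n : ℕ}
    (Λ₂ : AddSubgroup (A × (Fin n → ℤ)))
    (hstar : ∀ (lam : A) (x : Fin n → ℤ), ∃! p : A × (Fin n → ℤ),
        p ∈ Λ₂ ∧ p.1 = lam ∧ ∀ i, p.2 i = x i ∨ p.2 i = x i + 1) :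
    (∀ x : Fin n → ℤ, ∃! y : Fin n → ℤ,
        ((0 : A), y) ∈ Λ₂ ∧ ∀ i, y i = x i ∨ y i = x i + 1) ∧
    (∀ lam : A, ∃! x : Fin n → ℤ,
        (∀ i, x i = 0 ∨ x i = 1) ∧ (lam, x) ∈ Λ₂) ∧
    Λ₂.index = 2 ^ n := by
  have h : StarCondition Λ₂ := hstar
  refine ⟨fun x => h.existsUnique_fiber 0 x, fun lam => ?_, by simpa using h.index_eq⟩
  refine (existsUnique_congr fun x => ?_).1 (h.existsUnique_fiber lam 0)
  simp [InUnitCube, and_comm]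

/-- Suppose `Λ₁` is a lattice (a finitely generated free abelian group, here with rank
implicit; the pairing plays no role in the statement) and `Λ₂ ⊆ Λ₁ ⊕ ℤⁿ` is a sublattice
satisfying (★): every cube `λ + x + {0,1}ⁿ` with `λ ∈ Λ₁`, `x ∈ ℤⁿ` (the cube sitting in the
`ℤⁿ` factor) contains exactly one point of `Λ₂`.  Then:
(1) `Λ₂ ∩ ({0} ⊕ ℤⁿ)` is a 2-cube tiling lattice of `ℤⁿ`;
(2) for every `λ ∈ Λ₁` (in particular, for every element of a fixed generating set) there is
a unique `x ∈ {0,1}ⁿ` with `λ + x ∈ Λ₂`; and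
(3) `[Λ₁ ⊕ ℤⁿ : Λ₂] = 2ⁿ`. -/
theorem star_condition_consequences {A : Type} [AddCommGroup A]
    [Module.Free ℤ A] [Module.Finite ℤ A] {n : ℕ}
    (Λ₂ : AddSubgroup (A × (Fin n → ℤ)))
    (hstar : ∀ (lam : A) (x : Fin n → ℤ), ∃! p : A × (Fin n → ℤ),
        p ∈ Λ₂ ∧ p.1 = lam ∧ ∀ i, p.2 i = x i ∨ p.2 i = x i + 1) :
    (∀ x : Fin n → ℤ, ∃! y : Fin n → ℤ,
        ((0 : A), y) ∈ Λ₂ ∧ ∀ i, y i = x i ∨ y i = x i + 1) ∧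
    (∀ lam : A, ∃! x : Fin n → ℤ,
        (∀ i, x i = 0 ∨ x i = 1) ∧ (lam, x) ∈ Λ₂) ∧
    Λ₂.index = 2 ^ n :=
  star_condition_consequences_general Λ₂ hstar
end
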